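/- (1) Every nonzero a ∈ L is the support of some state m ∈ 𝒮 (i.e. there is m ∈ 𝒮 with m(x) = 1 if and only if a ≤ x, for all x ∈ L). (2) The support of every pure state in 𝒮 is an atom of L (a nonzero element p such that 0 ≤ q ≤ p implies q = 0 or q = p), and conversely every atom of L is the support of exactly one state in 𝒮, and that state is pure. -/

import Mathlib

/-- A separable, countably orthocomplete, orthomodular orthocomplemented poset:
a bounded partial order with an orthocomplementation `compl` in which every
sequence of pairwise-orthogonal elements has a least upper bound, the
orthomodular law holds, and every pairwise-orthogonal set of nonzero elements
is countable. -/
structure OrthomodularPoset (L : Type*) [PartialOrder L] [BoundedOrder L] where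
  compl : L → L
  compl_compl : ∀ a : L, compl (compl a) = a
  compl_antitone : ∀ a b : L, a ≤ b → compl b ≤ compl a
  lub_compl : ∀ a : L, IsLUB {a, compl a} ⊤
  glb_compl : ∀ a : L, IsGLB {a, compl a} ⊥
  ortho_sup : ∀ f : ℕ → L, (∀ i j : ℕ, i ≠ j → f i ≤ compl (f j)) →
    ∃ s : L, IsLUB (Set.range f) s
  orthomodular : ∀ a b : L, a ≤ b →
    ∃ c : L, IsGLB {b, compl a} c ∧ IsLUB {a, c} b
  separable : ∀ S : Set L, (∀ a ∈ S, a ≠ ⊥) →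
    (∀ a ∈ S, ∀ b ∈ S, a ≠ b → a ≤ compl b) → S.Countable

/-- A probability measure on an orthomodular poset: a `[0,1]`-valued function
with `m(0) = 0`, `m(1) = 1`, that is countably additive on pairwise-orthogonal
sequences (whenever the least upper bound exists). -/
def IsProbMeasure {L : Type*} [PartialOrder L] [BoundedOrder L]
    (P : OrthomodularPoset L) (m : L → ℝ) : Prop :=
  (∀ a : L, 0 ≤ m a ∧ m a ≤ 1) ∧ m ⊥ = 0 ∧ m ⊤ = 1 ∧
    ∀ f : ℕ → L, (∀ i j : ℕ, i ≠ j → f i ≤ P.compl (f j)) →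
      ∀ s : L, IsLUB (Set.range f) s → HasSum (fun i => m (f i)) (m s)

/-- `s` is the support of the state `m`: `m(x) = 1` exactly when `s ≤ x`. -/
def IsSupport {L : Type*} [PartialOrder L] [BoundedOrder L] (m : L → ℝ) (s : L) : Prop :=
  ∀ x : L, m x = 1 ↔ s ≤ x

/-- The state `m` is pure with respect to the set of states `S`: it is in `S`
and is not a nontrivial convex combination of two states in `S`. -/
def PureState {L : Type*} [PartialOrder L] [BoundedOrder L]
    (S : Set (L → ℝ)) (m : L → ℝ) : Prop :=
  m ∈ S ∧ ∀ m₁ ∈ S, ∀ m₂ ∈ S, ∀ t : ℝ, 0 < t → t < 1 →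
    (∀ x : L, m x = t * m₁ x + (1 - t) * m₂ x) → m₁ = m ∧ m₂ = m


/-!
Supports exist because, by separability, a maximal orthogonal family of nonzero `m`-null elements
is countable; its join `s` is null, and orthomodularity together with the directedness of the null
elements makes `s` the greatest null element, so `s^⊥` is the support.

For `a ≠ 0`, a countable mixture of states whose supports form a maximal orthogonal family below
`a` (plus one state with value `1` at `a`) has a support `s ≤ a` lying above the whole family; as
every nonzero element contains a support, `a ∧ s^⊥ = 0`, i.e. `s = a`.

If the support `a` of a pure state `m` had a proper nonzero part `q`, the midpoint of two states
concentrated on `q` and on `a ∧ q^⊥` would take the value `1` at `a`, hence be `m`, and purity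
would make the two states equal, which is absurd at `q`.
-/

theorem isLUB_pair_bot {α : Type*} [PartialOrder α] [OrderBot α] (a : α) : IsLUB {a, ⊥} a :=
  IsGreatest.isLUB ⟨Set.mem_insert a _, by rintro _ (rfl | rfl) <;> simp⟩

theorem tsum_mul_eq_one_iff {t v : ℕ → ℝ} (ht : HasSum t 1) (ht0 : ∀ i, 0 < t i)
    (hv0 : ∀ i, 0 ≤ v i) (hv1 : ∀ i, v i ≤ 1) : ∑' i, t i * v i = 1 ↔ ∀ i, v i = 1 := by
  refine ⟨fun h => ?_, fun h => by simp [h, ht.tsum_eq]⟩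
  by_contra! ⟨i, hi⟩
  have hle : ∀ j, t j * v j ≤ t j := fun j => mul_le_of_le_one_right (ht0 j).le (hv1 j)
  have hlt : ∑' j, t j * v j < ∑' j, t j :=
    Summable.tsum_lt_tsum hle (mul_lt_of_lt_one_right (ht0 i) ((hv1 i).lt_of_ne hi))
      (ht.summable.of_nonneg_of_le (fun j => mul_nonneg (ht0 j).le (hv0 j)) hle) ht.summable
  rw [h, ht.tsum_eq] at hlt
  exact hlt.false

theorem tsum_mul_ite_zero {t : ℕ → ℝ} (ht : HasSum t 1) (a b : ℝ) :
    ∑' i, t i * (if i = 0 then a else b) = t 0 * a + (1 - t 0) * b := by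
  have h := (ht.mul_right b).add (hasSum_ite_eq 0 (t 0 * (a - b)))
  calc ∑' i, t i * (if i = 0 then a else b)
      = ∑' i, (t i * b + if i = 0 then t 0 * (a - b) else 0) := by
        congr 1 with i
        split_ifs with hi
        · subst hi; ring
        · ring
    _ = t 0 * a + (1 - t 0) * b := by rw [h.tsum_eq]; ring

namespace OrthomodularPoset

variable {L : Type*} [PartialOrder L] [BoundedOrder L] (P : OrthomodularPoset L)

theorem compl_bot : P.compl ⊥ = ⊤ :=
  le_antisymm le_top <| (P.lub_compl ⊥).2 <| by rintro _ (rfl | rfl) <;> simp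

theorem le_compl_comm {a b : L} : a ≤ P.compl b ↔ b ≤ P.compl a :=
  ⟨fun h => by simpa only [P.compl_compl] using P.compl_antitone _ _ h,
    fun h => by simpa only [P.compl_compl] using P.compl_antitone _ _ h⟩

theorem compl_le_comm {a b : L} : P.compl a ≤ b ↔ P.compl b ≤ a := by
  rw [← P.compl_compl b, ← P.le_compl_comm, P.compl_compl, P.compl_compl]

theorem eq_bot_of_le_of_le_compl {a z : L} (h : z ≤ a) (h' : z ≤ P.compl a) : z = ⊥ :=
  le_bot_iff.mp <| (P.glb_compl a).2 <| by rintro _ (rfl | rfl) <;> assumption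

theorem exists_orthocomplement {a b : L} (hab : a ≤ b) :
    ∃ d, d ≤ b ∧ d ≤ P.compl a ∧ IsLUB {a, d} b := by
  obtain ⟨d, hd, hb⟩ := P.orthomodular a b hab
  exact ⟨d, hd.1 (Set.mem_insert b _), hd.1 (Set.mem_insert_of_mem b rfl), hb⟩

def orthogonalFamilies (p : L → Prop) : Set (Set L) :=
  {T | (∀ x ∈ T, p x ∧ x ≠ ⊥) ∧ T.Pairwise (· ≤ P.compl ·)}

theorem exists_maximal_orthogonalFamily (p : L → Prop) :
    ∃ T, Maximal (· ∈ P.orthogonalFamilies p) T := by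
  refine zorn_subset _ fun c hc hchain => ⟨⋃₀ c, ⟨?_, ?_⟩, fun T hT => Set.subset_sUnion_of_mem hT⟩
  · rintro x ⟨T, hT, hx⟩
    exact (hc hT).1 x hx
  · rintro x ⟨T, hT, hx⟩ y ⟨T', hT', hy⟩ hxy
    rcases hchain.total hT hT' with h | h
    · exact (hc hT').2 (h hx) hy hxy
    · exact (hc hT).2 hx (h hy) hxy

theorem eq_bot_of_maximal_orthogonalFamily {p : L → Prop} {T : Set L}
    (hT : Maximal (· ∈ P.orthogonalFamilies p) T) {s z : L} (hs : s ∈ upperBounds T)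
    (hz : p z) (hzs : z ≤ P.compl s) : z = ⊥ := by
  by_contra hz0
  have horth : ∀ y ∈ T, z ≤ P.compl y := fun y hy => hzs.trans (P.compl_antitone _ _ (hs hy))
  have hzT : z ∈ T := hT.mem_of_prop_insert
    ⟨by rintro x (rfl | hx); exacts [⟨hz, hz0⟩, hT.prop.1 x hx],
      hT.prop.2.insert fun y hy _ => ⟨horth y hy, P.le_compl_comm.mp (horth y hy)⟩⟩
  exact hz0 (P.eq_bot_of_le_of_le_compl (hs hzT) hzs)

theorem exists_orthogonal_seq_of_countable {T : Set L} (hT : T.Countable)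
    (horth : T.Pairwise (· ≤ P.compl ·)) :
    ∃ f : ℕ → L, Pairwise (fun i j => f i ≤ P.compl (f j)) ∧
      Set.range f ⊆ insert ⊥ T ∧ T ⊆ Set.range f := by
  obtain ⟨e, he⟩ := Set.countable_iff_exists_injective.mp hT
  have hf_e : ∀ x : T, Function.extend e Subtype.val ⊥ (e x) = x := he.extend_apply _ _
  have hf_bot : ∀ i, (¬∃ x, e x = i) → Function.extend e Subtype.val ⊥ i = ⊥ :=
    fun i hi => Function.extend_apply' _ _ _ hi
  refine ⟨Function.extend e Subtype.val ⊥, fun i j hij => ?_, ?_, fun x hx => ⟨e ⟨x, hx⟩, hf_e _⟩⟩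
  · dsimp only
    by_cases hi : ∃ x, e x = i
    · by_cases hj : ∃ y, e y = j
      · obtain ⟨⟨x, hx⟩, rfl⟩ := hi
        obtain ⟨⟨y, hy⟩, rfl⟩ := hj
        rw [hf_e, hf_e]
        exact horth hx hy fun hxy => hij (by subst hxy; rfl)
      · rw [hf_bot j hj, P.compl_bot]
        exact le_top
    · rw [hf_bot i hi]
      exact bot_le
  · rintro _ ⟨i, rfl⟩
    by_cases hi : ∃ x, e x = i
    · obtain ⟨x, rfl⟩ := hi
      exact Set.mem_insert_of_mem _ (hf_e x ▸ x.2)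
    · exact hf_bot i hi ▸ Set.mem_insert _ _

end OrthomodularPoset

namespace IsProbMeasure

variable {L : Type*} [PartialOrder L] [BoundedOrder L] {P : OrthomodularPoset L} {m : L → ℝ}

theorem nonneg (hm : IsProbMeasure P m) (x : L) : 0 ≤ m x := (hm.1 x).1

theorem le_one (hm : IsProbMeasure P m) (x : L) : m x ≤ 1 := (hm.1 x).2

theorem map_bot (hm : IsProbMeasure P m) : m ⊥ = 0 := hm.2.1

theorem map_top (hm : IsProbMeasure P m) : m ⊤ = 1 := hm.2.2.1

theorem hasSum (hm : IsProbMeasure P m) {f : ℕ → L} (hf : Pairwise (fun i j => f i ≤ P.compl (f j)))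
    {s : L} (hs : IsLUB (Set.range f) s) : HasSum (fun i => m (f i)) (m s) :=
  hm.2.2.2 f (fun _ _ hij => hf hij) s hs

theorem map_eq_add_of_isLUB_pair (hm : IsProbMeasure P m) {x d c : L} (hxd : x ≤ P.compl d)
    (hc : IsLUB {x, d} c) : m c = m x + m d := by
  let f : ℕ → L := fun i => if i = 0 then x else if i = 1 then d else ⊥
  have hf : Pairwise (fun i j => f i ≤ P.compl (f j)) := by
    rintro (_ | _ | i) (_ | _ | j) hij <;>
      simp [f, P.compl_bot, hxd, P.le_compl_comm.mp hxd] at hij ⊢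
  have hfc : IsLUB (Set.range f) c := by
    refine ⟨?_, fun u hu => hc.2 ?_⟩
    · rintro _ ⟨_ | _ | i, rfl⟩
      exacts [hc.1 (Set.mem_insert _ _), hc.1 (Set.mem_insert_of_mem _ rfl), bot_le]
    · rintro _ (rfl | rfl)
      exacts [hu ⟨0, rfl⟩, hu ⟨1, rfl⟩]
  have hsum : HasSum (fun i => m (f i)) (∑ i ∈ Finset.range 2, m (f i)) :=
    hasSum_sum_of_ne_finset_zero fun i hi => by
      simp only [Finset.mem_range, not_lt] at hi
      simp [f, show i ≠ 0 by omega, show i ≠ 1 by omega, hm.map_bot]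
  simpa [Finset.sum_range_succ, f] using (hm.hasSum hf hfc).unique hsum

theorem mono (hm : IsProbMeasure P m) {a b : L} (hab : a ≤ b) : m a ≤ m b := by
  obtain ⟨d, -, hda, hb⟩ := P.exists_orthocomplement hab
  rw [hm.map_eq_add_of_isLUB_pair (P.le_compl_comm.mp hda) hb]
  linarith [hm.nonneg d]

theorem map_compl (hm : IsProbMeasure P m) (x : L) : m (P.compl x) = 1 - m x := by
  have h := hm.map_eq_add_of_isLUB_pair (P.compl_compl x).ge (P.lub_compl x)
  rw [hm.map_top] at h
  linarith

theorem eq_one_of_le (hm : IsProbMeasure P m) {a b : L} (ha : m a = 1) (hab : a ≤ b) : m b = 1 :=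
  le_antisymm (hm.le_one b) (ha ▸ hm.mono hab)

theorem eq_zero_of_le_compl (hm : IsProbMeasure P m) {a b : L} (ha : m a = 1)
    (hb : b ≤ P.compl a) : m b = 0 :=
  le_antisymm (by linarith [hm.mono hb, hm.map_compl a]) (hm.nonneg b)

theorem exists_isGreatest_null (hm : IsProbMeasure P m)
    (hdir : DirectedOn (· ≤ ·) {x | m x = 0}) : ∃ s, IsGreatest {x | m x = 0} s := by
  obtain ⟨T, hT⟩ := P.exists_maximal_orthogonalFamily (m · = 0)
  obtain ⟨f, hf, hfT, hTf⟩ := P.exists_orthogonal_seq_of_countable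
    (P.separable T (fun x hx => (hT.prop.1 x hx).2) fun _ hx _ hy => hT.prop.2 hx hy) hT.prop.2
  obtain ⟨s, hs⟩ := P.ortho_sup f fun _ _ hij => hf hij
  have hTs : s ∈ upperBounds T := fun x hx => by
    obtain ⟨i, rfl⟩ := hTf hx
    exact hs.1 ⟨i, rfl⟩
  have hf0 : ∀ i, m (f i) = 0 := fun i => by
    rcases hfT ⟨i, rfl⟩ with h | h
    exacts [h ▸ hm.map_bot, (hT.prop.1 _ h).1]
  have hms : m s = 0 := (hm.hasSum hf hs).unique (by simp [hf0])
  refine ⟨s, hms, fun x hx => ?_⟩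
  obtain ⟨c, hc, hxc, hsc⟩ := hdir x hx s hms
  obtain ⟨d, -, hds, hsd⟩ := P.exists_orthocomplement hsc
  -- `c = s ∨ d` with `s ⊥ d`, so `d` is null and orthogonal to the family, hence `d = 0`
  have hmd : m d = 0 := by
    linarith [hm.map_eq_add_of_isLUB_pair (P.le_compl_comm.mp hds) hsd, hm.nonneg d,
      show m c = 0 from hc]
  have hd : d = ⊥ := P.eq_bot_of_maximal_orthogonalFamily hT hTs hmd hds
  exact hxc.trans ((isLUB_pair_bot s).unique (hd ▸ hsd)).ge

theorem exists_isSupport (hm : IsProbMeasure P m) (hdir : DirectedOn (· ≤ ·) {x | m x = 0}) :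
    ∃ s, IsSupport m s := by
  obtain ⟨s, hs0, hsmax⟩ := hm.exists_isGreatest_null hdir
  refine ⟨P.compl s, fun x => ?_⟩
  rw [P.compl_le_comm]
  constructor
  · intro hx
    exact hsmax (show m (P.compl x) = 0 by rw [hm.map_compl, hx, sub_self])
  · intro hx
    linarith [hm.mono hx, hm.map_compl x, hm.nonneg (P.compl x), show m s = 0 from hs0]

theorem _root_.IsSupport.ne_bot {s : L} (hs : IsSupport m s) (hm : IsProbMeasure P m) :
    s ≠ ⊥ := by
  rintro rfl
  have h := (hs ⊥).2 le_rfl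
  rw [hm.map_bot] at h
  exact zero_ne_one h

theorem isSupport_of_isAtom (hm : IsProbMeasure P m) (hdir : DirectedOn (· ≤ ·) {x | m x = 0})
    {a : L} (ha : IsAtom a) (hma : m a = 1) : IsSupport m a := by
  obtain ⟨s, hs⟩ := hm.exists_isSupport hdir
  obtain rfl : s = a := (ha.le_iff.mp ((hs a).1 hma)).resolve_left (hs.ne_bot hm)
  exact hs

end IsProbMeasure

def IsStronglyConvex {L : Type*} (S : Set (L → ℝ)) : Prop :=
  ∀ f : ℕ → (L → ℝ), (∀ i, f i ∈ S) → ∀ t : ℕ → ℝ, (∀ i, 0 < t i) → HasSum t 1 →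
    (fun x => ∑' i, t i * f i x) ∈ S

namespace IsStronglyConvex

variable {L : Type*} {S : Set (L → ℝ)}

theorem midpoint_mem (hS : IsStronglyConvex S) {m₁ m₂ : L → ℝ} (h₁ : m₁ ∈ S) (h₂ : m₂ ∈ S) :
    (fun x => 2⁻¹ * m₁ x + (1 - 2⁻¹) * m₂ x) ∈ S := by
  have h := hS (fun i => if i = 0 then m₁ else m₂) (fun i => by split_ifs <;> assumption)
    (fun i => 1 / 2 / 2 ^ i) (fun i => by positivity) (hasSum_geometric_two' 1)
  convert h using 2 with x
  simp only [ite_apply]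
  rw [tsum_mul_ite_zero (hasSum_geometric_two' 1)]
  norm_num

theorem exists_mem_eq_one_iff [PartialOrder L] [BoundedOrder L] {P : OrthomodularPoset L}
    (hS : IsStronglyConvex S) (hprob : ∀ m ∈ S, IsProbMeasure P m) {M : Set (L → ℝ)}
    (hMS : M ⊆ S) (hM : M.Countable) (hM₀ : M.Nonempty) :
    ∃ m ∈ S, ∀ x, m x = 1 ↔ ∀ n ∈ M, n x = 1 := by
  obtain ⟨g, rfl⟩ := hM.exists_eq_range hM₀
  have hg : ∀ i, g i ∈ S := fun i => hMS ⟨i, rfl⟩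
  refine ⟨_, hS g hg _ (fun i => by positivity) (hasSum_geometric_two' 1), fun x => ?_⟩
  rw [Set.forall_mem_range]
  exact tsum_mul_eq_one_iff (hasSum_geometric_two' 1) (fun i => by positivity)
    (fun i => (hprob _ (hg i)).nonneg x) (fun i => (hprob _ (hg i)).le_one x)

end IsStronglyConvex

section States

variable {L : Type*} [PartialOrder L] [BoundedOrder L] {P : OrthomodularPoset L}
  {S : Set (L → ℝ)}

theorem exists_isSupport_of_ne_bot (hprob : ∀ m ∈ S, IsProbMeasure P m)
    (hdir : ∀ m ∈ S, DirectedOn (· ≤ ·) {x | m x = 0}) (hS : IsStronglyConvex S)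
    (hstate : ∀ a : L, a ≠ ⊥ → ∃ m ∈ S, m a = 1) {a : L} (ha : a ≠ ⊥) :
    ∃ m ∈ S, IsSupport m a := by
  obtain ⟨T, hT⟩ := P.exists_maximal_orthogonalFamily (fun x => x ≤ a ∧ ∃ n ∈ S, IsSupport n x)
  choose! state hstateS hstate_supp using fun x (hx : x ∈ T) => (hT.prop.1 x hx).1.2
  obtain ⟨m₀, hm₀S, hm₀a⟩ := hstate a ha
  have hMS : insert m₀ (state '' T) ⊆ S := by
    rintro _ (rfl | ⟨x, hx, rfl⟩)
    exacts [hm₀S, hstateS x hx]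
  have hTc : T.Countable :=
    P.separable T (fun x hx => (hT.prop.1 x hx).2) fun _ hx _ hy => hT.prop.2 hx hy
  obtain ⟨m, hmS, hm⟩ := hS.exists_mem_eq_one_iff hprob hMS ((hTc.image state).insert m₀)
    (Set.insert_nonempty _ _)
  obtain ⟨s, hs⟩ := (hprob m hmS).exists_isSupport (hdir m hmS)
  have hsa : s ≤ a := (hs a).1 <| (hm a).2 <| by
    rintro _ (rfl | ⟨x, hx, rfl⟩)
    exacts [hm₀a, (hstate_supp x hx a).2 (hT.prop.1 x hx).1.1]
  have hTs : s ∈ upperBounds T := fun x hx =>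
    (hstate_supp x hx s).1 ((hm s).1 ((hs s).2 le_rfl) _ (Set.mem_insert_of_mem _ ⟨x, hx, rfl⟩))
  obtain ⟨d, hda, hds, hsd⟩ := P.exists_orthocomplement hsa
  have hd : d = ⊥ := by
    by_contra hd
    obtain ⟨n, hnS, hnd⟩ := hstate d hd
    obtain ⟨t, ht⟩ := (hprob n hnS).exists_isSupport (hdir n hnS)
    have htd : t ≤ d := (ht d).1 hnd
    exact ht.ne_bot (hprob n hnS) <|
      P.eq_bot_of_maximal_orthogonalFamily hT hTs ⟨htd.trans hda, n, hnS, ht⟩ (htd.trans hds)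
  exact ⟨m, hmS, (isLUB_pair_bot s).unique (hd ▸ hsd) ▸ hs⟩

theorem PureState.isAtom_of_isSupport (hprob : ∀ m ∈ S, IsProbMeasure P m)
    (hS : IsStronglyConvex S) (hstate : ∀ a : L, a ≠ ⊥ → ∃ m ∈ S, m a = 1) {m : L → ℝ}
    (hm : PureState S m) {a : L} (hma : IsSupport m a) (huniq : ∀ n ∈ S, n a = 1 → n = m) :
    IsAtom a := by
  refine ⟨hma.ne_bot (hprob m hm.1), fun q hqa => ?_⟩
  by_contra hq
  obtain ⟨d, hda, hdq, hqd⟩ := P.exists_orthocomplement hqa.le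
  have hd : d ≠ ⊥ := by
    rintro rfl
    exact hqa.ne ((isLUB_pair_bot q).unique hqd)
  obtain ⟨m₁, hm₁S, hm₁q⟩ := hstate q hq
  obtain ⟨m₂, hm₂S, hm₂d⟩ := hstate d hd
  have hmid : (fun x => 2⁻¹ * m₁ x + (1 - 2⁻¹) * m₂ x) = m :=
    huniq _ (hS.midpoint_mem hm₁S hm₂S) <| by
      rw [(hprob m₁ hm₁S).eq_one_of_le hm₁q hqa.le, (hprob m₂ hm₂S).eq_one_of_le hm₂d hda]
      norm_num
  obtain ⟨rfl, h₂⟩ := hm.2 m₁ hm₁S m₂ hm₂S 2⁻¹ (by norm_num) (by norm_num)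
    fun x => (congrFun hmid x).symm
  have hm₂q : m₂ q = 0 := (hprob m₂ hm₂S).eq_zero_of_le_compl hm₂d (P.le_compl_comm.mp hdq)
  rw [h₂, hm₁q] at hm₂q
  exact one_ne_zero hm₂q

end States

theorem support_atoms_general {L : Type*} [PartialOrder L] [BoundedOrder L]
    (P : OrthomodularPoset L) (S : Set (L → ℝ))
    (hS : ∀ m ∈ S, IsProbMeasure P m ∧
      ∀ a b : L, m a = 0 → m b = 0 → ∃ c : L, a ≤ c ∧ b ≤ c ∧ m c = 0)
    (hconvex : ∀ f : ℕ → (L → ℝ), (∀ i : ℕ, f i ∈ S) →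
      ∀ t : ℕ → ℝ, (∀ i : ℕ, 0 < t i) → HasSum t 1 →
        (fun x : L => ∑' i : ℕ, t i * f i x) ∈ S)
    (hB1 : ∀ a : L, a ≠ ⊥ → ∃ m : L → ℝ, PureState S m ∧ m a = 1)
    (hB2 : ∀ m : L → ℝ, PureState S m → ∀ a : L, IsSupport m a →
      ∀ n ∈ S, n a = 1 → n = m) :
    (∀ a : L, a ≠ ⊥ → ∃ m ∈ S, IsSupport m a) ∧
    (∀ m : L → ℝ, PureState S m → ∀ a : L, IsSupport m a →
      a ≠ ⊥ ∧ ∀ q : L, q ≤ a → q = ⊥ ∨ q = a) ∧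
    (∀ a : L, a ≠ ⊥ → (∀ q : L, q ≤ a → q = ⊥ ∨ q = a) →
      ∃ m : L → ℝ, (m ∈ S ∧ IsSupport m a ∧ PureState S m) ∧
        ∀ n ∈ S, IsSupport n a → n = m) := by
  have hprob : ∀ m ∈ S, IsProbMeasure P m := fun m hm => (hS m hm).1
  have hdir : ∀ m ∈ S, DirectedOn (· ≤ ·) {x | m x = 0} := fun m hm x hx y hy =>
    let ⟨c, hxc, hyc, hc⟩ := (hS m hm).2 x y hx hy
    ⟨c, hc, hxc, hyc⟩
  have hstate : ∀ a : L, a ≠ ⊥ → ∃ m ∈ S, m a = 1 := fun a ha =>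
    let ⟨m, hm, hma⟩ := hB1 a ha
    ⟨m, hm.1, hma⟩
  refine ⟨fun a ha => exists_isSupport_of_ne_bot hprob hdir hconvex hstate ha,
    fun m hm a hma => ?_, fun a ha hatom => ?_⟩
  · have h := hm.isAtom_of_isSupport hprob hconvex hstate hma (hB2 m hm a hma)
    exact ⟨h.ne_bot, fun q hq => h.le_iff.mp hq⟩
  · obtain ⟨m, hm, hma⟩ := hB1 a ha
    have hsupp : IsSupport m a := (hprob m hm.1).isSupport_of_isAtom (hdir m hm.1)
      ⟨ha, fun q hq => (hatom q hq.le).resolve_right hq.ne⟩ hma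
    exact ⟨m, ⟨hm.1, hsupp, hm⟩,
      fun n hn hn_supp => hB2 m hm a hsupp n hn ((hn_supp a).2 le_rfl)⟩

/-- (1) Every nonzero element of `L` is the support of some state in `S`.
(2) The support of every pure state is an atom of `L`, and conversely every
atom is the support of exactly one state in `S`, which is pure. -/
theorem support_atoms {L : Type*} [PartialOrder L] [BoundedOrder L]
    (P : OrthomodularPoset L) (S : Set (L → ℝ))
    (hS : ∀ m ∈ S, IsProbMeasure P m ∧
      ∀ a b : L, m a = 0 → m b = 0 → ∃ c : L, a ≤ c ∧ b ≤ c ∧ m c = 0)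
    (hfull : ∀ a b : L, (∀ m ∈ S, m a ≤ m b) → a ≤ b)
    (hconvex : ∀ f : ℕ → (L → ℝ), (∀ i : ℕ, f i ∈ S) →
      ∀ t : ℕ → ℝ, (∀ i : ℕ, 0 < t i) → HasSum t 1 →
        (fun x : L => ∑' i : ℕ, t i * f i x) ∈ S)
    (hB1 : ∀ a : L, a ≠ ⊥ → ∃ m : L → ℝ, PureState S m ∧ m a = 1)
    (hB2 : ∀ m : L → ℝ, PureState S m → ∀ a : L, IsSupport m a →
      ∀ n ∈ S, n a = 1 → n = m) :
    (∀ a : L, a ≠ ⊥ → ∃ m ∈ S, IsSupport m a) ∧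
    (∀ m : L → ℝ, PureState S m → ∀ a : L, IsSupport m a →
      a ≠ ⊥ ∧ ∀ q : L, q ≤ a → q = ⊥ ∨ q = a) ∧
    (∀ a : L, a ≠ ⊥ → (∀ q : L, q ≤ a → q = ⊥ ∨ q = a) →
      ∃ m : L → ℝ, (m ∈ S ∧ IsSupport m a ∧ PureState S m) ∧
        ∀ n ∈ S, IsSupport n a → n = m) :=
  support_atoms_general P S hS hconvex hB1 hB2
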